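/- arXiv:2602.07355 — 5 statements merged into one kernel-verified Lean document; each statement's English description precedes it below -/
import Mathlib

section
/- For all natural n ≥ 4, 2ỹ_{n+1} = 2ỹ_n - c·ψ^{n-1}, where ψ = 1 - φ and φ = (1+√5)/2 is the golden ratio. -/
noncomputable def c : ℝ := 4 / (9 - Real.sqrt 5)
noncomputable def φ : ℝ := (1 + Real.sqrt 5) / 2
noncomputable def ψ : ℝ := 1 - φ
noncomputable def F (k : ℕ) : ℝ := (φ ^ k - ψ ^ k) / Real.sqrt 5

/-- ỹ_n for n ≥ 4. -/
noncomputable def ytil (n : ℕ) : ℝ := ((3 * F n + F (n - 2) - 2) * c - 2 * F n + 2) / 2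

/-! Binet's formula identifies `F` with the Fibonacci numbers, and `ψ ^ (k + 1) = ψ F_{k+1} + F_k`
turns the claim into the linear identity `c (4 + ψ) = 2`, which is how `c` is chosen. -/

lemma ψ_eq_goldenConj : ψ = Real.goldenConj :=
  Real.one_sub_goldenConj

lemma F_eq_fib (k : ℕ) : F k = Nat.fib k := by
  rw [Real.coe_fib_eq, F, ψ_eq_goldenConj]
  rfl

lemma F_add_two (k : ℕ) : F (k + 2) = F k + F (k + 1) := by
  simp only [F_eq_fib, Nat.fib_add_two, Nat.cast_add]

lemma ψ_pow_succ (k : ℕ) : ψ ^ (k + 1) = ψ * F (k + 1) + F k := by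
  rw [ψ_eq_goldenConj, F_eq_fib, F_eq_fib, Real.goldenConj_mul_fib_succ_add_fib]

lemma c_mul_four_add_ψ : c * (4 + ψ) = 2 := by
  have h : 9 - Real.sqrt 5 ≠ 0 := by
    have : Real.sqrt 5 < 9 := by
      rw [Real.sqrt_lt' (by norm_num)]
      norm_num
    linarith
  rw [c, ψ, φ]
  field_simp
  ring

lemma two_mul_ytil_add_four_sub_two_mul_ytil_add_three (m : ℕ) :
    2 * ytil (m + 4) - 2 * ytil (m + 3) = (3 * F (m + 2) + F m) * c - 2 * F (m + 2) := by
  simp only [ytil, show m + 4 - 2 = m + 2 by omega, show m + 3 - 2 = m + 1 by omega]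
  linear_combination (3 * c - 2) * F_add_two (m + 2) + c * F_add_two m

theorem stmt2 (n : ℕ) (hn : 4 ≤ n) :
    2 * ytil (n + 1) = 2 * ytil n - c * ψ ^ (n - 1) := by
  obtain ⟨m, rfl⟩ : ∃ m, n = m + 3 := ⟨n - 3, by omega⟩
  rw [show m + 3 - 1 = (m + 1) + 1 by omega, ψ_pow_succ]
  linear_combination two_mul_ytil_add_four_sub_two_mul_ytil_add_three m - c * F_add_two m + F (m + 2) * c_mul_four_add_ψ
end

section
/- The subsequence (ỹ_{2k})_{k∈ℕ} is strictly increasing. -/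
lemma c_pos : 0 < c := by
  have : Real.sqrt 5 < 9 := (Real.sqrt_lt' (by norm_num)).2 (by norm_num)
  exact div_pos four_pos (sub_pos.2 this)

lemma one_lt_φ : 1 < φ := by
  have : 1 < Real.sqrt 5 := (Real.lt_sqrt zero_le_one).2 (by norm_num)
  unfold φ
  linarith

/-- Over an even index `2k` the two alternating increments combine to `a (r - 1) / r ^ (2k) > 0`. -/
lemma lt_add_two_of_alternating_increments {y : ℕ → ℝ} {a r : ℝ} (ha : 0 < a) (hr : 1 < r)
    (hrec : ∀ n : ℕ, 1 ≤ n →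
      2 * y (n + 1) = 2 * y n + a * (-1 : ℝ) ^ n * r ^ ((1 : ℤ) - (n : ℤ)))
    {k : ℕ} (hk : 1 ≤ k) : y (2 * k) < y (2 * k + 2) := by
  have hr₀ : r ≠ 0 := by positivity
  have hpow_even : r ^ ((1 : ℤ) - ↑(2 * k)) = r * (r ^ (2 * k))⁻¹ := by
    rw [zpow_sub₀ hr₀, zpow_one, zpow_natCast, div_eq_mul_inv]
  have hpow_odd : r ^ ((1 : ℤ) - ↑(2 * k + 1)) = (r ^ (2 * k))⁻¹ := by
    rw [show (1 : ℤ) - ↑(2 * k + 1) = -↑(2 * k) by push_cast; ring, zpow_neg, zpow_natCast]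
  have hstep : 2 * y (2 * k + 2) = 2 * y (2 * k) + a * (r - 1) * (r ^ (2 * k))⁻¹ := by
    rw [hrec (2 * k + 1) (by omega), hrec (2 * k) (by omega), hpow_even, hpow_odd, pow_succ,
      Even.neg_one_pow (even_two_mul k)]
    ring
  have : 0 < a * (r - 1) * (r ^ (2 * k))⁻¹ :=
    mul_pos (mul_pos ha (sub_pos.2 hr)) (inv_pos.2 (pow_pos (by linarith) _))
  linarith

theorem stmt4_general (y : ℕ → ℝ)
    (hrec : ∀ n : ℕ, 1 ≤ n →
      2 * y (n + 1) = 2 * y n + c * (-1 : ℝ) ^ n * φ ^ ((1 : ℤ) - (n : ℤ))) :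
    StrictMonoOn (fun k : ℕ => y (2 * k)) {k : ℕ | 1 ≤ k} := by
  refine strictMonoOn_of_lt_succ Set.ordConnected_Ici fun k _ hk _ => ?_
  rw [Order.succ_eq_add_one, mul_add_one]
  exact lt_add_two_of_alternating_increments c_pos one_lt_φ hrec hk

theorem stmt4 (y : ℕ → ℝ) (h1 : y 1 = c) (h2 : y 2 = c / 2)
    (hrec : ∀ n : ℕ, 1 ≤ n →
      2 * y (n + 1) = 2 * y n + c * (-1 : ℝ) ^ n * φ ^ ((1 : ℤ) - (n : ℤ))) :
    StrictMonoOn (fun k : ℕ => y (2 * k)) {k : ℕ | 1 ≤ k} :=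
  stmt4_general y hrec
end

section
/- The subsequence (ỹ_{2k+1})_{k∈ℕ} is strictly decreasing. -/
section AlternatingRecurrence

variable {y : ℕ → ℝ} {a r : ℝ}

lemma two_mul_sub_odd_eq
    (hrec : ∀ n : ℕ, 1 ≤ n → 2 * y (n + 1) = 2 * y n + a * (-1 : ℝ) ^ n * r ^ ((1 : ℤ) - n))
    (k : ℕ) :
    2 * (y (2 * (k + 1) + 1) - y (2 * k + 1)) =
      a * (r ^ (-(2 * k + 1 : ℤ)) - r ^ (-(2 * k : ℤ))) := by
  have hodd := hrec (2 * k + 1) (by omega)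
  have heven := hrec (2 * k + 2) (by omega)
  rw [Odd.neg_one_pow ⟨k, rfl⟩] at hodd
  rw [Even.neg_one_pow ⟨k + 1, by ring⟩] at heven
  rw [show 2 * (k + 1) + 1 = 2 * k + 2 + 1 by ring]
  push_cast at hodd heven
  rw [show (1 : ℤ) - (2 * k + 1) = -(2 * k) by ring] at hodd
  rw [show (1 : ℤ) - (2 * k + 2) = -(2 * k + 1) by ring] at heven
  linarith

theorem strictAnti_odd_of_alternating_recurrence
    (hrec : ∀ n : ℕ, 1 ≤ n → 2 * y (n + 1) = 2 * y n + a * (-1 : ℝ) ^ n * r ^ ((1 : ℤ) - n))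
    (ha : 0 < a) (hr : 1 < r) :
    StrictAnti (fun k : ℕ => y (2 * k + 1)) := by
  refine strictAnti_nat_of_succ_lt fun k => ?_
  have hpow : r ^ (-(2 * k + 1 : ℤ)) < r ^ (-(2 * k : ℤ)) := zpow_lt_zpow_right₀ hr (by omega)
  have hstep := two_mul_sub_odd_eq hrec k
  linarith [mul_lt_mul_of_pos_left hpow ha]

end AlternatingRecurrence

theorem stmt5_general (y : ℕ → ℝ)
    (hrec : ∀ n : ℕ, 1 ≤ n →
      2 * y (n + 1) = 2 * y n + c * (-1 : ℝ) ^ n * φ ^ ((1 : ℤ) - (n : ℤ))) :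
    StrictAnti (fun k : ℕ => y (2 * k + 1)) :=
  strictAnti_odd_of_alternating_recurrence hrec c_pos one_lt_φ

theorem stmt5 (y : ℕ → ℝ) (h1 : y 1 = c) (h2 : y 2 = c / 2)
    (hrec : ∀ n : ℕ, 1 ≤ n →
      2 * y (n + 1) = 2 * y n + c * (-1 : ℝ) ^ n * φ ^ ((1 : ℤ) - (n : ℤ))) :
    StrictAnti (fun k : ℕ => y (2 * k + 1)) :=
  stmt5_general y hrec
end

section
/- For all natural n ≥ 1, ỹ_{n+1} + ỹ_n ≤ 3c/2. -/
/-!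
With `ψ = -1/φ` the conjugate of the golden ratio, `(-1)^n φ^(1-n) = φ ψ^n`, so the recurrence
telescopes to `y n = c + c/2 (ψ - ψ^n)`. Using `ψ^2 = ψ + 1`,
`y (n+1) + y n = 3c/2 - c/2 (ψ^(n+2) - ψ^3)`, and `ψ^3 ≤ ψ^m` for `m ≥ 3` because `ψ ∈ (-1, 0)`.
Of the value of `c` only its sign enters.
-/

open Real

lemma φ_eq_goldenRatio : φ = goldenRatio := rfl

lemma c_nonneg : 0 ≤ c := by
  have : √5 < 9 := (sqrt_lt' (by norm_num)).mpr (by norm_num)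
  unfold c
  exact div_nonneg (by norm_num) (by linarith)

lemma neg_one_pow_mul_goldenRatio_zpow (n : ℕ) :
    (-1 : ℝ) ^ n * goldenRatio ^ ((1 : ℤ) - n) = goldenRatio * goldenConj ^ n := by
  rw [zpow_sub₀ goldenRatio_ne_zero, zpow_one, zpow_natCast, div_eq_mul_inv, ← inv_pow,
    inv_goldenRatio, mul_left_comm, ← mul_pow, neg_one_mul, neg_neg]

lemma goldenConj_pow_three_le {m : ℕ} (hm : 3 ≤ m) : goldenConj ^ 3 ≤ goldenConj ^ m := by
  have habs : |goldenConj| ≤ 1 :=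
    abs_le.mpr ⟨neg_one_lt_goldenConj.le, goldenConj_neg.le.trans zero_le_one⟩
  calc goldenConj ^ 3 = -|goldenConj| ^ 3 := by
        rw [abs_of_neg goldenConj_neg]; ring
    _ ≤ -|goldenConj| ^ m := neg_le_neg (pow_le_pow_of_le_one (abs_nonneg _) habs hm)
    _ ≤ goldenConj ^ m := by rw [← abs_pow]; exact neg_abs_le _

lemma eq_of_succ_eq_add_goldenConj_pow {a : ℝ} {y : ℕ → ℝ} (h1 : y 1 = a)
    (hrec : ∀ n, 1 ≤ n → y (n + 1) = y n + a / 2 * goldenRatio * goldenConj ^ n) :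
    ∀ n, 1 ≤ n → y n = a + a / 2 * (goldenConj - goldenConj ^ n) := by
  intro n hn
  induction n, hn using Nat.le_induction with
  | base => rw [h1]; ring
  | succ k hk ih =>
    rw [hrec k hk, ih, ← one_sub_goldenConj]
    ring

theorem stmt11_general (y : ℕ → ℝ) (h1 : y 1 = c)
    (hrec : ∀ n : ℕ, 1 ≤ n →
      2 * y (n + 1) = 2 * y n + c * (-1 : ℝ) ^ n * φ ^ ((1 : ℤ) - (n : ℤ)))
    (n : ℕ) (hn : 1 ≤ n) :
    y (n + 1) + y n ≤ 3 * c / 2 := by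
  have hstep : ∀ k, 1 ≤ k → y (k + 1) = y k + c / 2 * goldenRatio * goldenConj ^ k := by
    intro k hk
    have h := hrec k hk
    rw [φ_eq_goldenRatio, mul_assoc, neg_one_pow_mul_goldenRatio_zpow] at h
    linarith
  have hy := eq_of_succ_eq_add_goldenConj_pow h1 hstep
  have hψ := goldenConj_pow_three_le (m := n + 2) (by omega)
  calc y (n + 1) + y n
      = 3 * c / 2 - c / 2 * (goldenConj ^ (n + 2) - goldenConj ^ 3) := by
        rw [hy (n + 1) (by omega), hy n hn]
        linear_combination (c / 2) * (goldenConj ^ n - goldenConj - 1) * goldenConj_sq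
    _ ≤ 3 * c / 2 := sub_le_self _ (mul_nonneg (by linarith [c_nonneg]) (sub_nonneg.mpr hψ))

theorem stmt11 (y : ℕ → ℝ) (h1 : y 1 = c) (h2 : y 2 = c / 2)
    (hrec : ∀ n : ℕ, 1 ≤ n →
      2 * y (n + 1) = 2 * y n + c * (-1 : ℝ) ^ n * φ ^ ((1 : ℤ) - (n : ℤ)))
    (n : ℕ) (hn : 1 ≤ n) :
    y (n + 1) + y n ≤ 3 * c / 2 :=
  stmt11_general y h1 hrec n hn
end

section
/- The optimal value of the linear program max γ subject to p₁ ≥ γ; (1/2)p₁ + p₂ ≥ γ; (1/2)p₁ + (1/2)p₂ + p₃ ≥ γ; (1/2)p₁ + (2/3)p₂ + (1/2)p₃ + (1/3)p₄ ≥ γ; p₁+p₂+p₃+p₄ ≤ 1; p₁,p₂,p₃,p₄ ≥ 0 is exactly 5/9, attained at p₁ = 5/9, p₂ = 3/9, p₃ = 1/9, p₄ = 0. -/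
/-- Weak duality: the multipliers `1/9, 2/9, 2/3` on the first, third and fourth constraints
form an optimal dual solution (the second constraint is slack at the optimum). -/
theorem le_five_ninths_of_feasible {K : Type*} [Field K] [LinearOrder K] [IsStrictOrderedRing K]
    {γ p₁ p₂ p₃ p₄ : K} (h₁ : p₁ ≥ γ) (h₃ : (1 / 2) * p₁ + (1 / 2) * p₂ + p₃ ≥ γ)
    (h₄ : (1 / 2) * p₁ + (2 / 3) * p₂ + (1 / 2) * p₃ + (1 / 3) * p₄ ≥ γ)
    (hsum : p₁ + p₂ + p₃ + p₄ ≤ 1) (hp₄ : 0 ≤ p₄) : γ ≤ 5 / 9 :=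
  calc γ ≤ (1 / 9) * p₁ + (2 / 9) * ((1 / 2) * p₁ + (1 / 2) * p₂ + p₃)
          + (2 / 3) * ((1 / 2) * p₁ + (2 / 3) * p₂ + (1 / 2) * p₃ + (1 / 3) * p₄) := by linarith
    _ = 5 / 9 * (p₁ + p₂ + p₃ + p₄) - 1 / 3 * p₄ := by ring
    _ ≤ 5 / 9 := by linarith

theorem stmt16 :
    (∀ γ p1 p2 p3 p4 : ℝ,
      p1 ≥ γ →
      (1 / 2) * p1 + p2 ≥ γ →
      (1 / 2) * p1 + (1 / 2) * p2 + p3 ≥ γ →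
      (1 / 2) * p1 + (2 / 3) * p2 + (1 / 2) * p3 + (1 / 3) * p4 ≥ γ →
      p1 + p2 + p3 + p4 ≤ 1 →
      0 ≤ p1 → 0 ≤ p2 → 0 ≤ p3 → 0 ≤ p4 →
      γ ≤ 5 / 9) ∧
    ((5 / 9 : ℝ) ≥ 5 / 9 ∧
     (1 / 2) * (5 / 9 : ℝ) + 3 / 9 ≥ 5 / 9 ∧
     (1 / 2) * (5 / 9 : ℝ) + (1 / 2) * (3 / 9) + 1 / 9 ≥ 5 / 9 ∧
     (1 / 2) * (5 / 9 : ℝ) + (2 / 3) * (3 / 9) + (1 / 2) * (1 / 9) + (1 / 3) * 0 ≥ 5 / 9 ∧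
     (5 / 9 : ℝ) + 3 / 9 + 1 / 9 + 0 ≤ 1 ∧
     (0 : ℝ) ≤ 5 / 9 ∧ (0 : ℝ) ≤ 3 / 9 ∧ (0 : ℝ) ≤ 1 / 9 ∧ (0 : ℝ) ≤ 0) :=
  ⟨fun _ _ _ _ _ h₁ _ h₃ h₄ hsum _ _ _ hp₄ => le_five_ninths_of_feasible h₁ h₃ h₄ hsum hp₄,
    by norm_num⟩
end
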